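/- arXiv:2102.12311 — 2 statements merged into one kernel-verified Lean document; each statement's English description precedes it below -/
import Mathlib

section
/- Let r ∈ ℝ^m and suppose {C(i)}_{i∈𝒮} cover {1,…,m}, with r_i := I_{C(i)} r and Λ_i as defined from Λ = ∑_i I_{C(i)}ᵀ I_{C(i)}. Then rᵀ r = ∑_{i∈𝒮} r_iᵀ Λ_i^{-1} r_i, i.e., the global squared Euclidean norm is the sum of locally computable overlap-weighted quadratic forms. -/
open Matrix Finset

/-- The selection matrix `I_C` whose rows are the standard unit row vectors `e_jᵀ` for `j ∈ C`. -/
noncomputable def sel {m : ℕ} (C : Finset (Fin m)) : Matrix {j // j ∈ C} (Fin m) ℝ :=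
  Matrix.of fun i j => if (i : Fin m) = j then 1 else 0

/-! `Λ` is diagonal, its `j`-th entry being the number of sets `C i` containing `j`, and `Λ_i` is
its restriction to `C i`. Hence `r_iᵀ Λ_i⁻¹ r_i = ∑_{j ∈ C i} r_j² / Λ_jj`, and summing over `i`
counts each `r_j² / Λ_jj` exactly `Λ_jj` times; covering makes every `Λ_jj` nonzero. -/

theorem Matrix.inv_diagonal_of_ne_zero {n K : Type*} [Fintype n] [DecidableEq n] [Field K]
    {d : n → K} (hd : ∀ j, d j ≠ 0) : (diagonal d)⁻¹ = diagonal d⁻¹ := by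
  refine inv_eq_left_inv ?_
  rw [diagonal_mul_diagonal, ← diagonal_one]
  exact congrArg diagonal (funext fun j => inv_mul_cancel₀ (hd j))

theorem Matrix.dotProduct_diagonal_mulVec_self {n R : Type*} [Fintype n] [DecidableEq n]
    [CommSemiring R] (w v : n → R) : v ⬝ᵥ diagonal w *ᵥ v = ∑ j, w j * v j ^ 2 := by
  simp only [dotProduct, mulVec_diagonal]
  exact sum_congr rfl fun j _ => by ring

section coverCount

variable {ι α : Type*} [Fintype ι] [DecidableEq α]

def coverCount (C : ι → Finset α) (j : α) : ℕ := #{i | j ∈ C i}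

theorem coverCount_pos {C : ι → Finset α} {j : α} (h : ∃ i, j ∈ C i) : 0 < coverCount C j := by
  obtain ⟨i, hi⟩ := h
  exact card_pos.mpr ⟨i, by simpa using hi⟩

theorem sum_sum_mem_eq_sum_coverCount_smul [Fintype α] {M : Type*} [AddCommMonoid M]
    (C : ι → Finset α) (f : α → M) : ∑ i, ∑ a ∈ C i, f a = ∑ j, coverCount C j • f j := by
  simp only [coverCount, ← sum_const]
  exact sum_comm' fun i j => by simp

end coverCount

section sel

variable {m : ℕ} (C : Finset (Fin m))

theorem sel_mulVec (r : Fin m → ℝ) : sel C *ᵥ r = fun a : {j // j ∈ C} => r a := by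
  ext a
  simp [sel, mulVec, dotProduct]

theorem sel_mul {n : Type*} (A : Matrix (Fin m) n ℝ) : sel C * A = A.submatrix (↑) id := by
  ext a k
  simp [sel, mul_apply]

theorem mul_transpose_sel {l : Type*} (B : Matrix l (Fin m) ℝ) :
    B * (sel C)ᵀ = B.submatrix id (↑) := by
  ext i a
  simp [sel, mul_apply]

theorem sel_mul_mul_transpose_sel (A : Matrix (Fin m) (Fin m) ℝ) :
    sel C * A * (sel C)ᵀ = A.submatrix (↑) (↑) := by
  rw [sel_mul, mul_transpose_sel, submatrix_submatrix]
  rfl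

theorem transpose_sel_mul_sel :
    (sel C)ᵀ * sel C = diagonal fun j => if j ∈ C then 1 else 0 := by
  ext j k
  simp only [sel, mul_apply, transpose_apply, of_apply, diagonal_apply, mul_ite, mul_one, mul_zero]
  rw [sum_coe_sort C fun x => if x = k then if x = j then 1 else 0 else 0, sum_ite_eq']
  rcases eq_or_ne j k with rfl | hjk
  · simp
  · simp [hjk, hjk.symm]

end sel

theorem sum_transpose_sel_mul_sel {m N : ℕ} (C : Fin N → Finset (Fin m)) :
    ∑ i, (sel (C i))ᵀ * sel (C i) = diagonal fun j => (coverCount C j : ℝ) := by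
  ext j k
  simp [transpose_sel_mul_sel, Matrix.sum_apply, diagonal_apply, coverCount]

theorem sel_mulVec_dotProduct_inv_sel_diagonal_mulVec {m : ℕ} (C : Finset (Fin m))
    {d : Fin m → ℝ} (hd : ∀ j ∈ C, d j ≠ 0) (r : Fin m → ℝ) :
    sel C *ᵥ r ⬝ᵥ (sel C * diagonal d * (sel C)ᵀ)⁻¹ *ᵥ (sel C *ᵥ r) =
      ∑ j ∈ C, (d j)⁻¹ * r j ^ 2 := by
  rw [sel_mul_mul_transpose_sel, submatrix_diagonal _ _ Subtype.val_injective,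
    inv_diagonal_of_ne_zero (d := d ∘ Subtype.val) fun a : {j // j ∈ C} => hd a a.2,
    sel_mulVec, dotProduct_diagonal_mulVec_self]
  exact sum_coe_sort C fun j => (d j)⁻¹ * r j ^ 2

/-- If the sets `C i` cover `{1,…,m}`, `r_i = I_{C i} r`, and `Λ_i = I_{C i} Λ I_{C i}ᵀ` with
`Λ = ∑ i, I_{C i}ᵀ I_{C i}`, then `rᵀ r = ∑ i, r_iᵀ Λ_i⁻¹ r_i`. -/
theorem stmt8 {m N : ℕ} (C : Fin N → Finset (Fin m))
    (hcover : ∀ j : Fin m, ∃ i, j ∈ C i) (r : Fin m → ℝ) :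
    r ⬝ᵥ r =
      ∑ i, (sel (C i)).mulVec r ⬝ᵥ
        ((sel (C i) * (∑ i', (sel (C i'))ᵀ * sel (C i')) * (sel (C i))ᵀ)⁻¹).mulVec
          ((sel (C i)).mulVec r) := by
  have hcount (j : Fin m) : (coverCount C j : ℝ) ≠ 0 := by
    exact_mod_cast (coverCount_pos (hcover j)).ne'
  calc r ⬝ᵥ r = ∑ j, coverCount C j • ((coverCount C j : ℝ)⁻¹ * r j ^ 2) := by
        refine sum_congr rfl fun j _ => ?_
        rw [nsmul_eq_mul, mul_inv_cancel_left₀ (hcount j), sq]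
    _ = ∑ i, ∑ j ∈ C i, (coverCount C j : ℝ)⁻¹ * r j ^ 2 :=
        (sum_sum_mem_eq_sum_coverCount_smul C _).symm
    _ = _ := by
        simp only [sum_transpose_sel_mul_sel,
          sel_mulVec_dotProduct_inv_sel_diagonal_mulVec _ fun j _ => hcount j]
end

section
/- Let S = Sᵀ ⪰ 0, s ∈ range(S), and let λ̄* be the CG limit with S λ̄* = s and P_N λ̄* = P_N λ̄⁰ (P_N = projection onto null(S)). Then the CG iterates satisfy ‖λ̄^{n} − λ̄*‖_S² ≤ 2 ((√κ − 1)/(√κ + 1))^{n} ‖λ̄⁰ − λ̄*‖_S², where κ = ω_max/ω_min is the ratio of largest to smallest nonzero eigenvalue of S and ‖x‖_S² = xᵀ S x. -/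
/-!
The residuals `r k = s - S λᵏ = -S (λᵏ - λ*)` of conjugate gradients are orthogonal to all earlier
search directions, which are pairwise `S`-conjugate; since `s` lies in the range of `S`, so does
every residual, and no direction can fall into `ker S` before the residual vanishes. Hence, as long
as the iteration runs, the error `λⁿ - λ*` is `S`-orthogonal to `span {p₀, …, pₙ₋₁}`, a space that
contains both `λⁿ - λ⁰` and the Krylov vectors `Sʲ⁺¹ (λ⁰ - λ*)`, `j < n`. So `λⁿ - λ*` minimises
the `S`-seminorm over `λ⁰ - λ* + span {p₀, …, pₙ₋₁}`, and in particular is no larger there than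
`D(S) (λ⁰ - λ*)` for any polynomial `D` of degree `≤ n` with `D(0) = 1`.

Diagonalising `S`, `‖D(S) e‖_S² ≤ max D(ω)² · ‖e‖_S²`, the maximum taken over the eigenvalues
`ω ≠ 0` only, as the kernel of `S` carries no `S`-seminorm; these lie in `[ω_min, ω_max]`. The
Chebyshev polynomial `Tₙ` transported from `[-1, 1]` to `[ω_min, ω_max]` and normalised at `0`
satisfies `D(ω)² ≤ 4 / (σⁿ + σ⁻ⁿ)² ≤ 2 σ⁻ⁿ` there, where `σ = (√κ + 1) / (√κ - 1)`.
-/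

open Matrix Polynomial

lemma Polynomial.Chebyshev.T_real_eval_half_add_inv {u : ℝ} (hu : 0 < u) (n : ℕ) :
    (Chebyshev.T ℝ n).eval ((u + u⁻¹) / 2) = (u ^ n + u⁻¹ ^ n) / 2 := by
  have h := Chebyshev.T_real_cosh (Real.log u) n
  simp only [Real.cosh_eq, Real.exp_neg, Int.cast_natCast, Real.exp_nat_mul, Real.exp_log hu] at h
  simpa [inv_pow] using h

lemma sq_two_div_add_inv_le {x : ℝ} (hx : 0 < x) : (2 / (x + x⁻¹)) ^ 2 ≤ 2 * x⁻¹ := by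
  have hxx : x * x⁻¹ = 1 := mul_inv_cancel₀ hx.ne'
  rw [div_pow, div_le_iff₀ (by positivity)]
  have : 0 < x⁻¹ := inv_pos.mpr hx
  nlinarith [sq_nonneg (x - 1), sq_nonneg x⁻¹]

lemma add_div_sub_eq_half_add_inv {a b : ℝ} (ha : 0 < a) (hab : a < b) :
    (b + a) / (b - a) =
      ((√(b / a) + 1) / (√(b / a) - 1) + ((√(b / a) + 1) / (√(b / a) - 1))⁻¹) / 2 := by
  set t := √(b / a)
  have hb : b = a * t ^ 2 := by
    rw [Real.sq_sqrt (div_pos (ha.trans hab) ha).le]; field_simp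
  have ht1 : 1 < t := by rw [Real.lt_sqrt zero_le_one, one_pow, one_lt_div ha]; exact hab
  have : t - 1 ≠ 0 := by linarith
  have : t + 1 ≠ 0 := by linarith
  have : t ^ 2 - 1 ≠ 0 := by nlinarith
  rw [show b + a = a * (t ^ 2 + 1) by rw [hb]; ring, show b - a = a * (t ^ 2 - 1) by rw [hb]; ring,
    mul_div_mul_left _ _ ha.ne', inv_div]
  field_simp
  ring

-- `ω ↦ (b + a - 2ω) / (b - a)` maps `[a, b]` onto `[-1, 1]` and `0` to `(b + a) / (b - a) > 1`.
noncomputable def chebyshevResidual (a b : ℝ) (n : ℕ) : ℝ[X] :=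
  C ((Chebyshev.T ℝ n).eval ((b + a) / (b - a)))⁻¹ *
    (Chebyshev.T ℝ n).comp (C ((b + a) / (b - a)) - C (2 / (b - a)) * X)

lemma natDegree_chebyshevResidual_le (a b : ℝ) (n : ℕ) :
    (chebyshevResidual a b n).natDegree ≤ n := by
  refine (natDegree_C_mul_le _ _).trans (natDegree_comp_le.trans ?_)
  rw [Chebyshev.natDegree_T, Int.natAbs_natCast]
  refine (Nat.mul_le_mul_left n (natDegree_sub_le _ _)).trans ?_
  simp only [natDegree_C, zero_max]
  exact (Nat.mul_le_mul_left n ((natDegree_C_mul_le _ _).trans natDegree_X_le)).trans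
    (Nat.mul_one n).le

lemma eval_chebyshevResidual (a b ω : ℝ) (n : ℕ) :
    (chebyshevResidual a b n).eval ω =
      (Chebyshev.T ℝ n).eval ((b + a - 2 * ω) / (b - a)) /
        (Chebyshev.T ℝ n).eval ((b + a) / (b - a)) := by
  simp only [chebyshevResidual, eval_mul, eval_C, eval_comp, eval_sub, eval_X]
  rw [inv_mul_eq_div]
  ring_nf

lemma chebyshevResidual_eval_zero {a b : ℝ} (ha : 0 ≤ a) (hab : a < b) (n : ℕ) :
    (chebyshevResidual a b n).eval 0 = 1 := by
  rw [eval_chebyshevResidual, mul_zero, sub_zero, div_self]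
  refine (zero_lt_one.trans_le (Chebyshev.one_le_eval_T_real _ ?_)).ne'
  rw [one_le_div (by linarith)]
  linarith

lemma sq_eval_chebyshevResidual_le {a b : ℝ} (ha : 0 < a) (hab : a < b) (n : ℕ) {ω : ℝ}
    (hω : ω ∈ Set.Icc a b) :
    (chebyshevResidual a b n).eval ω ^ 2 ≤ 2 * ((√(b / a) - 1) / (√(b / a) + 1)) ^ n := by
  set σ := (√(b / a) + 1) / (√(b / a) - 1)
  have ht1 : 1 < √(b / a) := by rw [Real.lt_sqrt zero_le_one, one_pow, one_lt_div ha]; exact hab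
  have hσ : 0 < σ := div_pos (by linarith) (by linarith)
  have hT : |(Chebyshev.T ℝ n).eval ((b + a - 2 * ω) / (b - a))| ≤ 1 := by
    refine Chebyshev.abs_eval_T_real_le_one _ ?_
    rw [abs_div, abs_of_pos (sub_pos.mpr hab), div_le_one (sub_pos.mpr hab), abs_le]
    constructor <;> linarith [hω.1, hω.2]
  have hq : (√(b / a) - 1) / (√(b / a) + 1) = σ⁻¹ := (inv_div _ _).symm
  rw [eval_chebyshevResidual, add_div_sub_eq_half_add_inv ha hab,
    Chebyshev.T_real_eval_half_add_inv hσ, hq, inv_pow]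
  set x := σ ^ n
  set y := (Chebyshev.T ℝ n).eval ((b + a - 2 * ω) / (b - a))
  calc (y / ((x + x⁻¹) / 2)) ^ 2 = y ^ 2 * (2 / (x + x⁻¹)) ^ 2 := by
        rw [div_div_eq_mul_div]; ring
    _ ≤ 1 * (2 / (x + x⁻¹)) ^ 2 := by gcongr; exact (sq_le_one_iff_abs_le_one y).mpr hT
    _ ≤ 2 * x⁻¹ := by rw [one_mul]; exact sq_two_div_add_inv_le (pow_pos hσ n)

lemma exists_residualPoly_sq_le {a b : ℝ} (ha : 0 < a) (hab : a ≤ b) (n : ℕ) :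
    ∃ D : ℝ[X], D.natDegree ≤ n ∧ D.eval 0 = 1 ∧
      ∀ ω ∈ Set.Icc a b, D.eval ω ^ 2 ≤ 2 * ((√(b / a) - 1) / (√(b / a) + 1)) ^ n := by
  rcases hab.lt_or_eq with hlt | rfl
  · exact ⟨_, natDegree_chebyshevResidual_le a b n, chebyshevResidual_eval_zero ha.le hlt n,
      fun ω hω => sq_eval_chebyshevResidual_le ha hlt n hω⟩
  · refine ⟨(1 - C a⁻¹ * X) ^ n, ?_, by simp, fun ω hω => ?_⟩
    · refine (natDegree_pow_le_of_le n ((natDegree_sub_le _ _).trans ?_)).trans (mul_one n).le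
      simpa using (natDegree_C_mul_le a⁻¹ X).trans natDegree_X_le
    · obtain rfl : ω = a := le_antisymm hω.2 hω.1
      rw [div_self ha.ne', Real.sqrt_one, sub_self, zero_div]
      simp only [eval_pow, eval_sub, eval_one, eval_mul, eval_C, eval_X, inv_mul_cancel₀ ha.ne',
        sub_self]
      rcases n.eq_zero_or_pos with rfl | hn
      · norm_num
      · simp [zero_pow hn.ne']

section

variable {ι : Type*}

def directionSpan (p : ℕ → ι → ℝ) (k : ℕ) : Submodule ℝ (ι → ℝ) :=
  Submodule.span ℝ (p '' Set.Iio k)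

lemma directionSpan_mono (p : ℕ → ι → ℝ) : Monotone (directionSpan p) :=
  fun _ _ h => Submodule.span_mono (Set.image_mono (Set.Iio_subset_Iio h))

lemma mem_directionSpan {p : ℕ → ι → ℝ} {i k : ℕ} (h : i < k) : p i ∈ directionSpan p k :=
  Submodule.subset_span ⟨i, h, rfl⟩

variable [Fintype ι]

lemma dotProduct_eq_zero_of_mem_directionSpan {p : ℕ → ι → ℝ} {k : ℕ} {x v : ι → ℝ}
    (hx : ∀ i < k, x ⬝ᵥ p i = 0) (hv : v ∈ directionSpan p k) : x ⬝ᵥ v = 0 := by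
  induction hv using Submodule.span_induction with
  | mem v hv => obtain ⟨i, hi, rfl⟩ := hv; exact hx i hi
  | zero => exact dotProduct_zero x
  | add v w _ _ hv hw => rw [dotProduct_add, hv, hw, add_zero]
  | smul c v _ hv => rw [dotProduct_smul, hv, smul_zero]

lemma Matrix.IsHermitian.dotProduct_mulVec_eq {S : Matrix ι ι ℝ} (hS : S.IsHermitian)
    (x y : ι → ℝ) : x ⬝ᵥ S *ᵥ y = S *ᵥ x ⬝ᵥ y := by
  rw [dotProduct_mulVec, ← mulVec_transpose, ← conjTranspose_eq_transpose_of_trivial, hS.eq]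

lemma Matrix.PosSemidef.dotProduct_mulVec_le_add {S : Matrix ι ι ℝ} (hS : S.PosSemidef)
    {e w : ι → ℝ} (h : S *ᵥ e ⬝ᵥ w = 0) : e ⬝ᵥ S *ᵥ e ≤ (e + w) ⬝ᵥ S *ᵥ (e + w) := by
  have hw := hS.dotProduct_mulVec_nonneg w
  rw [star_trivial] at hw
  have hew : e ⬝ᵥ S *ᵥ w = 0 := by rw [hS.1.dotProduct_mulVec_eq, h]
  have hwe : w ⬝ᵥ S *ᵥ e = 0 := by rw [dotProduct_comm, h]
  rw [mulVec_add, dotProduct_add, add_dotProduct, add_dotProduct, hew, hwe]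
  linarith

lemma Matrix.aeval_mulVec_mem_of_coeff_zero [DecidableEq ι] {S : Matrix ι ι ℝ}
    {V : Submodule ℝ (ι → ℝ)} {y : ι → ℝ} {n : ℕ} (hV : ∀ j < n, S ^ (j + 1) *ᵥ y ∈ V)
    {u : ℝ[X]} (hu : u.natDegree ≤ n) (hu0 : u.coeff 0 = 0) : aeval S u *ᵥ y ∈ V := by
  rw [aeval_eq_sum_range' (Nat.lt_succ_of_le hu), Finset.sum_range_succ', hu0, zero_smul, add_zero,
    sum_mulVec]
  exact V.sum_mem fun j hj => by
    rw [smul_mulVec]; exact V.smul_mem _ (hV j (Finset.mem_range.mp hj))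

open scoped MatrixOrder in
lemma Matrix.IsHermitian.dotProduct_aeval_mulVec_le [DecidableEq ι] {S : Matrix ι ι ℝ}
    (hS : S.IsHermitian) (q : ℝ[X]) (M : ℝ) (hM : ∀ w ∈ spectrum ℝ S, w * q.eval w ^ 2 ≤ M * w)
    (x : ι → ℝ) : (aeval S q *ᵥ x) ⬝ᵥ S *ᵥ (aeval S q *ᵥ x) ≤ M * (x ⬝ᵥ S *ᵥ x) := by
  have hsa : IsSelfAdjoint S := hS
  have hQ : aeval S q = cfc q.eval S := (cfc_polynomial q S).symm
  have hdiff : M • S - aeval S q * S * aeval S q =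
      cfc (fun w => M * w - q.eval w * w * q.eval w) S := by
    rw [hQ, cfc_sub .., cfc_const_mul .., cfc_mul .., cfc_mul .., cfc_id' ..]
  have hpsd : (M • S - aeval S q * S * aeval S q).PosSemidef := by
    rw [hdiff, ← nonneg_iff_posSemidef]
    exact cfc_nonneg fun w hw => by nlinarith [hM w hw]
  have hQT : (aeval S q)ᵀ = aeval S q := by
    have h : IsSelfAdjoint (aeval S q) := hQ ▸ cfc_predicate _ S
    simpa [IsSelfAdjoint, star_eq_conjTranspose] using h
  have := hpsd.dotProduct_mulVec_nonneg x
  simp only [star_trivial, sub_mulVec, smul_mulVec, dotProduct_sub, dotProduct_smul,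
    ← mulVec_mulVec] at this
  rw [dotProduct_mulVec x (aeval S q), ← mulVec_transpose, hQT] at this
  simpa [smul_eq_mul, sub_nonneg] using this

structure IsCGIteration (S : Matrix ι ι ℝ) (s : ι → ℝ) (lam r p : ℕ → ι → ℝ) (α β : ℕ → ℝ) :
    Prop where
  r_zero : r 0 = s - S *ᵥ lam 0
  p_zero : p 0 = r 0
  α_eq : ∀ k, r k ≠ 0 → α k = (r k ⬝ᵥ r k) / (p k ⬝ᵥ S *ᵥ p k)
  lam_succ : ∀ k, r k ≠ 0 → lam (k + 1) = lam k + α k • p k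
  lam_succ_of_eq_zero : ∀ k, r k = 0 → lam (k + 1) = lam k
  r_succ : ∀ k, r k ≠ 0 → r (k + 1) = r k - α k • S *ᵥ p k
  r_succ_of_eq_zero : ∀ k, r k = 0 → r (k + 1) = r k
  β_eq : ∀ k, r k ≠ 0 → β k = (r (k + 1) ⬝ᵥ r (k + 1)) / (r k ⬝ᵥ r k)
  p_succ : ∀ k, r k ≠ 0 → p (k + 1) = r (k + 1) + β k • p k

namespace IsCGIteration

variable {S : Matrix ι ι ℝ} {s : ι → ℝ} {lam r p : ℕ → ι → ℝ} {α β : ℕ → ℝ}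

lemma residual_eq (h : IsCGIteration S s lam r p α β) (k : ℕ) : r k = s - S *ᵥ lam k := by
  induction k with
  | zero => exact h.r_zero
  | succ k ih =>
    by_cases hk : r k = 0
    · rw [h.r_succ_of_eq_zero k hk, h.lam_succ_of_eq_zero k hk, ih]
    · rw [h.r_succ k hk, h.lam_succ k hk, ih, mulVec_add, mulVec_smul]
      abel

lemma residual_eq_zero_of_le (h : IsCGIteration S s lam r p α β) {j k : ℕ} (hj : r j = 0)
    (hjk : j ≤ k) : r k = 0 := by
  induction k, hjk using Nat.le_induction with
  | base => exact hj
  | succ k _ ih => rw [h.r_succ_of_eq_zero k ih, ih]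

lemma residual_mem_directionSpan (h : IsCGIteration S s lam r p α β) {n j : ℕ}
    (hn : ∀ i < n, r i ≠ 0) (hj : j ≤ n) : r j ∈ directionSpan p (j + 1) := by
  cases j with
  | zero => rw [← h.p_zero]; exact mem_directionSpan zero_lt_one
  | succ i =>
    rw [show r (i + 1) = p (i + 1) - β i • p i by rw [h.p_succ i (hn i hj)]; abel]
    exact sub_mem (mem_directionSpan (by omega))
      (Submodule.smul_mem _ _ (mem_directionSpan (by omega)))

lemma lam_sub_mem_directionSpan (h : IsCGIteration S s lam r p α β) {n k : ℕ}
    (hn : ∀ i < n, r i ≠ 0) (hk : k ≤ n) : lam k - lam 0 ∈ directionSpan p k := by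
  induction k with
  | zero => rw [sub_self]; exact zero_mem _
  | succ k ih =>
    rw [h.lam_succ k (hn k hk), add_sub_right_comm]
    exact add_mem (directionSpan_mono p k.le_succ (ih (by omega)))
      (Submodule.smul_mem _ _ (mem_directionSpan k.lt_succ_self))

lemma dotProduct_p_eq_dotProduct_self (h : IsCGIteration S s lam r p α β) {n k : ℕ}
    (hn : ∀ i < n, r i ≠ 0) (hk : k ≤ n) (hr : ∀ i < k, r k ⬝ᵥ p i = 0) :
    r k ⬝ᵥ p k = r k ⬝ᵥ r k := by
  cases k with
  | zero => rw [h.p_zero]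
  | succ i => rw [h.p_succ i (hn i hk), dotProduct_add, dotProduct_smul, hr i i.lt_succ_self,
      smul_zero, add_zero]

-- A direction in `ker S` would be orthogonal to the residual, which lies in `range S`.
lemma dotProduct_mulVec_p_pos (h : IsCGIteration S s lam r p α β) (hS : S.PosSemidef)
    (hs : ∃ z, S *ᵥ z = s) {k : ℕ} (hk : r k ≠ 0) (hrp : r k ⬝ᵥ p k = r k ⬝ᵥ r k) :
    0 < p k ⬝ᵥ S *ᵥ p k := by
  obtain ⟨z, rfl⟩ := hs
  have hnn : 0 ≤ p k ⬝ᵥ S *ᵥ p k := by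
    simpa only [star_trivial] using hS.dotProduct_mulVec_nonneg (p k)
  refine hnn.lt_of_ne fun h0 => hk (dotProduct_self_eq_zero.mp ?_)
  have hSp : S *ᵥ p k = 0 := (hS.dotProduct_mulVec_zero_iff (p k)).mp (by simpa using h0.symm)
  rw [← hrp, h.residual_eq, ← mulVec_sub, ← hS.1.dotProduct_mulVec_eq, hSp, dotProduct_zero]

lemma alpha_pos (h : IsCGIteration S s lam r p α β) (hS : S.PosSemidef) (hs : ∃ z, S *ᵥ z = s)
    {k : ℕ} (hk : r k ≠ 0) (hrp : r k ⬝ᵥ p k = r k ⬝ᵥ r k) : 0 < α k := by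
  rw [h.α_eq k hk]
  exact div_pos (by simpa using dotProduct_self_star_pos_iff.mpr hk)
    (h.dotProduct_mulVec_p_pos hS hs hk hrp)

lemma alpha_mul_dotProduct_mulVec_p (h : IsCGIteration S s lam r p α β) {k : ℕ} (hk : r k ≠ 0)
    (hα : 0 < α k) : α k * (p k ⬝ᵥ S *ᵥ p k) = r k ⬝ᵥ r k := by
  rw [h.α_eq k hk] at hα ⊢
  have : p k ⬝ᵥ S *ᵥ p k ≠ 0 := fun h0 => by simp [h0] at hα
  field_simp

lemma residual_succ_orthogonal (h : IsCGIteration S s lam r p α β) {k : ℕ} (hk : r k ≠ 0)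
    (hα : 0 < α k) (hr : ∀ i < k, r k ⬝ᵥ p i = 0) (hp : ∀ i < k, p i ⬝ᵥ S *ᵥ p k = 0)
    (hrp : r k ⬝ᵥ p k = r k ⬝ᵥ r k) : ∀ i < k + 1, r (k + 1) ⬝ᵥ p i = 0 := by
  intro i hi
  rw [h.r_succ k hk, sub_dotProduct, smul_dotProduct, dotProduct_comm (S *ᵥ p k), smul_eq_mul]
  rcases Nat.lt_succ_iff_lt_or_eq.mp hi with hi | rfl
  · rw [hr i hi, hp i hi, mul_zero, sub_zero]
  · rw [hrp, h.alpha_mul_dotProduct_mulVec_p hk hα, sub_self]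

lemma alpha_mul_dotProduct_mulVec (h : IsCGIteration S s lam r p α β)
    (hS : S.IsHermitian) {i : ℕ} (hi : r i ≠ 0) (x : ι → ℝ) :
    α i * (p i ⬝ᵥ S *ᵥ x) = r i ⬝ᵥ x - r (i + 1) ⬝ᵥ x := by
  rw [h.r_succ i hi, hS.dotProduct_mulVec_eq, ← smul_eq_mul, ← smul_dotProduct, sub_dotProduct,
    sub_sub_cancel]

lemma p_succ_conjugate (h : IsCGIteration S s lam r p α β) (hS : S.IsHermitian) {n k : ℕ}
    (hn : ∀ i < n, r i ≠ 0) (hk : k < n) (hα : ∀ i ≤ k, 0 < α i)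
    (hp : ∀ i < k, p i ⬝ᵥ S *ᵥ p k = 0) (hr : ∀ i < k + 1, r (k + 1) ⬝ᵥ p i = 0) :
    ∀ i < k + 1, p i ⬝ᵥ S *ᵥ p (k + 1) = 0 := by
  have hrr : ∀ j ≤ k, r j ⬝ᵥ r (k + 1) = 0 := fun j hj => by
    rw [dotProduct_comm]
    exact dotProduct_eq_zero_of_mem_directionSpan hr
      (directionSpan_mono p (by omega) (h.residual_mem_directionSpan hn (by omega : j ≤ n)))
  intro i hi
  have hαi := h.alpha_mul_dotProduct_mulVec hS (hn i (by omega)) (r (k + 1))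
  rw [h.p_succ k (hn k hk), mulVec_add, mulVec_smul, dotProduct_add, dotProduct_smul, smul_eq_mul]
  rcases Nat.lt_succ_iff_lt_or_eq.mp hi with hi | rfl
  · rw [hrr i hi.le, hrr (i + 1) hi, sub_zero] at hαi
    rw [(mul_eq_zero.mp hαi).resolve_left (hα i hi.le).ne', hp i hi, mul_zero, add_zero]
  · rw [hrr i le_rfl, zero_sub] at hαi
    refine (mul_eq_zero.mp ?_).resolve_left (hα i le_rfl).ne'
    rw [mul_add, hαi, h.β_eq i (hn i hk), mul_left_comm,
      h.alpha_mul_dotProduct_mulVec_p (hn i hk) (hα i le_rfl)]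
    have : r i ⬝ᵥ r i ≠ 0 := mt dotProduct_self_eq_zero.mp (hn i hk)
    field_simp
    ring

lemma orthogonal_and_conjugate (h : IsCGIteration S s lam r p α β) (hS : S.PosSemidef)
    (hs : ∃ z, S *ᵥ z = s) {n : ℕ} (hn : ∀ i < n, r i ≠ 0) {k : ℕ} (hk : k ≤ n) :
    (∀ i < k, r k ⬝ᵥ p i = 0) ∧ (∀ i < k, p i ⬝ᵥ S *ᵥ p k = 0) := by
  induction k using Nat.strong_induction_on with
  | _ k ih =>
    rcases k with _ | k
    · simp
    have hα : ∀ i ≤ k, 0 < α i := fun i hi =>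
      h.alpha_pos hS hs (hn i (by omega))
        (h.dotProduct_p_eq_dotProduct_self hn (by omega) (ih i (by omega) (by omega)).1)
    obtain ⟨hr, hp⟩ := ih k k.lt_succ_self (by omega)
    have hr' := h.residual_succ_orthogonal (hn k hk) (hα k le_rfl) hr hp
      (h.dotProduct_p_eq_dotProduct_self hn (by omega) hr)
    exact ⟨hr', h.p_succ_conjugate hS.1 hn hk hα hp hr'⟩

lemma alpha_pos_of_lt (h : IsCGIteration S s lam r p α β) (hS : S.PosSemidef)
    (hs : ∃ z, S *ᵥ z = s) {n : ℕ} (hn : ∀ i < n, r i ≠ 0) {i : ℕ} (hi : i < n) : 0 < α i :=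
  h.alpha_pos hS hs (hn i hi)
    (h.dotProduct_p_eq_dotProduct_self hn hi.le (h.orthogonal_and_conjugate hS hs hn hi.le).1)

lemma mulVec_mem_directionSpan (h : IsCGIteration S s lam r p α β) {n : ℕ}
    (hn : ∀ i < n, r i ≠ 0) (hα : ∀ i < n, 0 < α i) {k : ℕ} (hk : k ≤ n) {v : ι → ℝ}
    (hv : v ∈ directionSpan p k) : S *ᵥ v ∈ directionSpan p (k + 1) := by
  refine (Submodule.span_le (p := (directionSpan p (k + 1)).comap S.mulVecLin)).mpr ?_ hv
  rintro _ ⟨i, hi : i < k, rfl⟩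
  have hSp : S *ᵥ p i = (α i)⁻¹ • (r i - r (i + 1)) := by
    rw [h.r_succ i (hn i (by omega)), sub_sub_cancel, smul_smul,
      inv_mul_cancel₀ (hα i (by omega)).ne', one_smul]
  have hr : ∀ j ≤ i + 1, r j ∈ directionSpan p (k + 1) := fun j hj =>
    directionSpan_mono p (by omega) (h.residual_mem_directionSpan hn (by omega))
  rw [SetLike.mem_coe, Submodule.mem_comap, mulVecLin_apply, hSp]
  exact Submodule.smul_mem _ _ (sub_mem (hr i (by omega)) (hr (i + 1) le_rfl))

lemma pow_mulVec_residual_zero_mem [DecidableEq ι] (h : IsCGIteration S s lam r p α β) {n : ℕ}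
    (hn : ∀ i < n, r i ≠ 0) (hα : ∀ i < n, 0 < α i) {j : ℕ} (hj : j < n) :
    S ^ j *ᵥ r 0 ∈ directionSpan p (j + 1) := by
  induction j with
  | zero => rw [pow_zero, one_mulVec, ← h.p_zero]; exact mem_directionSpan zero_lt_one
  | succ j ih =>
    rw [pow_succ', ← mulVec_mulVec]
    exact h.mulVec_mem_directionSpan hn hα hj.le (ih (by omega))

lemma mulVec_sub_eq_neg (h : IsCGIteration S s lam r p α β) {lamstar : ι → ℝ}
    (hstar : S *ᵥ lamstar = s) (k : ℕ) : S *ᵥ (lam k - lamstar) = -r k := by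
  rw [h.residual_eq, mulVec_sub, hstar]; abel

lemma aeval_mulVec_sub_mem_directionSpan [DecidableEq ι] (h : IsCGIteration S s lam r p α β)
    (hS : S.PosSemidef) {lamstar : ι → ℝ} (hstar : S *ᵥ lamstar = s) {n : ℕ}
    (hn : ∀ i < n, r i ≠ 0) {D : ℝ[X]} (hD : D.natDegree ≤ n) (hD0 : D.eval 0 = 1) :
    aeval S D *ᵥ (lam 0 - lamstar) - (lam 0 - lamstar) ∈ directionSpan p n := by
  have hα := fun i (hi : i < n) => h.alpha_pos_of_lt hS ⟨lamstar, hstar⟩ hn hi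
  have hpow : ∀ j < n, S ^ (j + 1) *ᵥ (lam 0 - lamstar) ∈ directionSpan p n := fun j hj => by
    rw [pow_succ, ← mulVec_mulVec, h.mulVec_sub_eq_neg hstar, mulVec_neg]
    exact neg_mem (directionSpan_mono p hj (h.pow_mulVec_residual_zero_mem hn hα hj))
  have := aeval_mulVec_mem_of_coeff_zero hpow (u := D - 1)
    ((natDegree_sub_le _ _).trans (by simpa using hD)) (by simp [coeff_zero_eq_eval_zero, hD0])
  rwa [map_sub, map_one, sub_mulVec, one_mulVec] at this

lemma energy_le_aeval [DecidableEq ι] (h : IsCGIteration S s lam r p α β) (hS : S.PosSemidef)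
    {lamstar : ι → ℝ} (hstar : S *ᵥ lamstar = s) (n : ℕ) {D : ℝ[X]} (hD : D.natDegree ≤ n)
    (hD0 : D.eval 0 = 1) :
    (lam n - lamstar) ⬝ᵥ S *ᵥ (lam n - lamstar) ≤
      (aeval S D *ᵥ (lam 0 - lamstar)) ⬝ᵥ S *ᵥ (aeval S D *ᵥ (lam 0 - lamstar)) := by
  by_cases hn : ∀ i < n, r i ≠ 0
  · set x := aeval S D *ᵥ (lam 0 - lamstar)
    have hmem : x - (lam n - lamstar) ∈ directionSpan p n := by
      rw [show x - (lam n - lamstar) = (x - (lam 0 - lamstar)) - (lam n - lam 0) by abel]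
      exact sub_mem (h.aeval_mulVec_sub_mem_directionSpan hS hstar hn hD hD0)
        (h.lam_sub_mem_directionSpan hn le_rfl)
    have horth : S *ᵥ (lam n - lamstar) ⬝ᵥ (x - (lam n - lamstar)) = 0 := by
      rw [h.mulVec_sub_eq_neg hstar, neg_dotProduct, dotProduct_eq_zero_of_mem_directionSpan
        (h.orthogonal_and_conjugate hS ⟨lamstar, hstar⟩ hn le_rfl).1 hmem, neg_zero]
    simpa using hS.dotProduct_mulVec_le_add horth
  · obtain ⟨j, hj, hrj⟩ : ∃ j < n, r j = 0 := by simpa using hn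
    rw [h.mulVec_sub_eq_neg hstar, h.residual_eq_zero_of_le hrj hj.le, neg_zero, dotProduct_zero]
    simpa only [star_trivial] using hS.dotProduct_mulVec_nonneg _

end IsCGIteration

end

theorem stmt13_general {m : ℕ} (S : Matrix (Fin m) (Fin m) ℝ) (hpsd : S.PosSemidef)
    (hS : S.IsHermitian) (s : Fin m → ℝ)
    (lam r p : ℕ → Fin m → ℝ) (α β : ℕ → ℝ)
    (hr0 : r 0 = s - S.mulVec (lam 0)) (hp0 : p 0 = r 0)
    (hα : ∀ k, r k ≠ 0 → α k = (r k ⬝ᵥ r k) / (p k ⬝ᵥ S.mulVec (p k)))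
    (hlam : ∀ k, r k ≠ 0 → lam (k + 1) = lam k + α k • p k)
    (hlam' : ∀ k, r k = 0 → lam (k + 1) = lam k)
    (hr : ∀ k, r k ≠ 0 → r (k + 1) = r k - α k • S.mulVec (p k))
    (hr' : ∀ k, r k = 0 → r (k + 1) = r k)
    (hβ : ∀ k, r k ≠ 0 → β k = (r (k + 1) ⬝ᵥ r (k + 1)) / (r k ⬝ᵥ r k))
    (hp : ∀ k, r k ≠ 0 → p (k + 1) = r (k + 1) + β k • p k)
    (lamstar : Fin m → ℝ) (hstar : S.mulVec lamstar = s)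
    (ωmax ωmin : ℝ)
    (hmax : IsGreatest {x : ℝ | x ≠ 0 ∧ ∃ i, hS.eigenvalues i = x} ωmax)
    (hmin : IsLeast {x : ℝ | x ≠ 0 ∧ ∃ i, hS.eigenvalues i = x} ωmin) :
    ∀ n : ℕ,
      (lam n - lamstar) ⬝ᵥ S.mulVec (lam n - lamstar) ≤
        2 * ((Real.sqrt (ωmax / ωmin) - 1) / (Real.sqrt (ωmax / ωmin) + 1)) ^ n *
          ((lam 0 - lamstar) ⬝ᵥ S.mulVec (lam 0 - lamstar)) := by
  intro n
  have hcg : IsCGIteration S s lam r p α β := ⟨hr0, hp0, hα, hlam, hlam', hr, hr', hβ, hp⟩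
  have hωmin : 0 < ωmin := by
    obtain ⟨hne, i, rfl⟩ := hmin.1
    exact (hpsd.eigenvalues_nonneg i).lt_of_ne' hne
  obtain ⟨D, hD, hD0, hDbound⟩ := exists_residualPoly_sq_le hωmin (hmax.2 hmin.1) n
  refine (hcg.energy_le_aeval hpsd hstar n hD hD0).trans
    (hS.dotProduct_aeval_mulVec_le D _ (fun w hw => ?_) _)
  obtain ⟨i, rfl⟩ : w ∈ Set.range hS.eigenvalues := hS.spectrum_real_eq_range_eigenvalues ▸ hw
  rcases (hpsd.eigenvalues_nonneg i).eq_or_lt with h0 | hpos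
  · rw [← h0]; simp
  · rw [mul_comm]
    exact mul_le_mul_of_nonneg_right
      (hDbound _ ⟨hmin.2 ⟨hpos.ne', i, rfl⟩, hmax.2 ⟨hpos.ne', i, rfl⟩⟩) hpos.le

/-- CG convergence-rate estimate for semidefinite systems: with `S = Sᵀ ⪰ 0`, `range S ≠ {0}`,
`s ∈ range S`, and `λ̄*` the CG limit satisfying `S λ̄* = s` and `P_N λ̄* = P_N λ̄⁰`, the iterates
satisfy `‖λ̄^n − λ̄*‖_S² ≤ 2 ((√κ−1)/(√κ+1))^n ‖λ̄⁰ − λ̄*‖_S²`, where `κ = ω_max/ω_min` is the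
ratio of the largest and smallest nonzero eigenvalues of `S`. -/
theorem stmt13 {m : ℕ} (S : Matrix (Fin m) (Fin m) ℝ) (hpsd : S.PosSemidef)
    (hS : S.IsHermitian) (hS0 : S ≠ 0) (s : Fin m → ℝ) (hs : ∃ z, S.mulVec z = s)
    (lam r p : ℕ → Fin m → ℝ) (α β : ℕ → ℝ)
    (hr0 : r 0 = s - S.mulVec (lam 0)) (hp0 : p 0 = r 0)
    (hα : ∀ k, r k ≠ 0 → α k = (r k ⬝ᵥ r k) / (p k ⬝ᵥ S.mulVec (p k)))
    (hlam : ∀ k, r k ≠ 0 → lam (k + 1) = lam k + α k • p k)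
    (hlam' : ∀ k, r k = 0 → lam (k + 1) = lam k)
    (hr : ∀ k, r k ≠ 0 → r (k + 1) = r k - α k • S.mulVec (p k))
    (hr' : ∀ k, r k = 0 → r (k + 1) = r k)
    (hβ : ∀ k, r k ≠ 0 → β k = (r (k + 1) ⬝ᵥ r (k + 1)) / (r k ⬝ᵥ r k))
    (hp : ∀ k, r k ≠ 0 → p (k + 1) = r (k + 1) + β k • p k)
    (lamstar : Fin m → ℝ) (hstar : S.mulVec lamstar = s)
    (hstarN : ∀ v : Fin m → ℝ, S.mulVec v = 0 → lamstar ⬝ᵥ v = lam 0 ⬝ᵥ v)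
    (ωmax ωmin : ℝ)
    (hmax : IsGreatest {x : ℝ | x ≠ 0 ∧ ∃ i, hS.eigenvalues i = x} ωmax)
    (hmin : IsLeast {x : ℝ | x ≠ 0 ∧ ∃ i, hS.eigenvalues i = x} ωmin) :
    ∀ n : ℕ,
      (lam n - lamstar) ⬝ᵥ S.mulVec (lam n - lamstar) ≤
        2 * ((Real.sqrt (ωmax / ωmin) - 1) / (Real.sqrt (ωmax / ωmin) + 1)) ^ n *
          ((lam 0 - lamstar) ⬝ᵥ S.mulVec (lam 0 - lamstar)) :=
  stmt13_general S hpsd hS s lam r p α β hr0 hp0 hα hlam hlam' hr hr' hβ hp lamstar hstar ωmax ωmin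
    hmax hmin
end
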